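/- Let A be a join-semilattice, c ∈ A, and suppose A = I₁ ⊕_c I₂ with projections π₁ : A → I₁, π₂ : A → I₂ determined by φ_c (i.e., φ_c(π₁(x), π₂(x), x) for all x). Then I₁ = {a ∈ A : π₂(a) = π₂(c)} and I₂ = {a ∈ A : π₁(a) = π₁(c)}; in other words, I₁ is exactly the class of c under the kernel of π₂, and I₂ is the class of c under the kernel of π₁. -/

import Mathlib

/-! In a `c`-direct sum, `c` decomposes as `(c, c)`, and `φ_c(x₁, c, x)` forces `x = x₁`; so
the `π₂`-class of `c` lies in `I₁`. Conversely, for `a ∈ I₁` the absorption laws give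
`π₂ a ≤ c` and `π₁ a ≤ a`, after which the projection equations of `φ_c` pin down
`π₁ a = a` and `π₂ a = c`. The statement for `I₂` is the same one for the swapped sum. -/

variable {α : Type*}

/-- `PMeet a b m`: the infimum of `{a, b}` exists and equals `m`. -/
def PMeet [SemilatticeSup α] (a b m : α) : Prop :=
  m ≤ a ∧ m ≤ b ∧ ∀ u, u ≤ a → u ≤ b → u ≤ m

/-- Partial equation `a ∧ b = a' ∧ b'`: if either infimum exists, so does the
other and they are equal. -/
def MeetEq [SemilatticeSup α] (a b a' b' : α) : Prop :=
  (∀ m, PMeet a b m → PMeet a' b' m) ∧ (∀ m, PMeet a' b' m → PMeet a b m)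

/-- Partial equation `(a ∧ b) ∨ y = a' ∧ b'`: if either side exists, so does
the other and they are equal. -/
def MeetJoinEq [SemilatticeSup α] (a b y a' b' : α) : Prop :=
  (∀ m, PMeet a b m → PMeet a' b' (m ⊔ y)) ∧
  (∀ m', PMeet a' b' m' → ∃ m, PMeet a b m ∧ m ⊔ y = m')

/-- `φ_c(x₁, x₂, x)`: the conjunction of dist, p1, p2 and join. -/
def Phi [SemilatticeSup α] (c x₁ x₂ x : α) : Prop :=
  PMeet (x ⊔ x₁) (x ⊔ x₂) x ∧
  PMeet (x ⊔ x₁) (c ⊔ x₁) x₁ ∧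
  PMeet (x ⊔ x₂) (c ⊔ x₂) x₂ ∧
  x₁ ⊔ x₂ = x ⊔ c

/-- A subsemilattice: a subset closed under join. -/
def SubSemilattice [SemilatticeSup α] (I : Set α) : Prop :=
  ∀ a ∈ I, ∀ b ∈ I, a ⊔ b ∈ I

/-- `A = I₁ ⊕_c I₂`: the generalized (c-)direct sum of two subsemilattices. -/
structure CDirectSum [SemilatticeSup α] (c : α) (I₁ I₂ : Set α) : Prop where
  sub1 : SubSemilattice I₁
  sub2 : SubSemilattice I₂
  mod1 : ∀ x y : α, ∀ x₁ ∈ I₁, ∀ x₂ ∈ I₂, x₁ ⊔ x₂ ≤ x ⊔ c →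
    MeetJoinEq (x ⊔ x₁) (x ⊔ x₂) y (x ⊔ y ⊔ x₁) (x ⊔ y ⊔ x₂)
  mod2 : ∀ x y : α, ∀ x₁ ∈ I₁, ∀ x₂ ∈ I₂, x ≤ x₁ ⊔ x₂ →
    MeetJoinEq (x ⊔ x₁) (c ⊔ x₁) y (x ⊔ y ⊔ x₁) (c ⊔ y ⊔ x₁) ∧
    MeetJoinEq (x ⊔ x₂) (c ⊔ x₂) y (x ⊔ y ⊔ x₂) (c ⊔ y ⊔ x₂)
  abs1 : ∀ x₁ ∈ I₁, ∀ y₁ ∈ I₁, ∀ z₂ ∈ I₂, MeetEq x₁ (y₁ ⊔ z₂) x₁ (y₁ ⊔ c)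
  abs2 : ∀ x₂ ∈ I₂, ∀ y₂ ∈ I₂, ∀ z₁ ∈ I₁, MeetEq x₂ (y₂ ⊔ z₁) x₂ (y₂ ⊔ c)
  exi : ∀ x₁ ∈ I₁, ∀ x₂ ∈ I₂, ∃ x : α, Phi c x₁ x₂ x
  onto : ∀ x : α, ∃ x₁ ∈ I₁, ∃ x₂ ∈ I₂, Phi c x₁ x₂ x

section

variable [SemilatticeSup α] {a b m c x x₁ x₂ : α}

theorem PMeet.comm (h : PMeet a b m) : PMeet b a m :=
  ⟨h.2.1, h.1, fun u hb ha => h.2.2 u ha hb⟩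

theorem pMeet_of_le (h : a ≤ b) : PMeet a b a :=
  ⟨le_rfl, h, fun _ hu _ => hu⟩

theorem MeetEq.le_of_le {b' : α} (h : MeetEq a b a b') (hab : a ≤ b) : a ≤ b' :=
  (h.1 a (pMeet_of_le hab)).2.1

theorem MeetJoinEq.comm {y a' b' : α} (h : MeetJoinEq a b y a' b') :
    MeetJoinEq b a y b' a' :=
  ⟨fun m hm => (h.1 m hm.comm).comm, fun m' hm' =>
    let ⟨m, hm, hmy⟩ := h.2 m' hm'.comm
    ⟨m, hm.comm, hmy⟩⟩

theorem Phi.symm (h : Phi c x₁ x₂ x) : Phi c x₂ x₁ x :=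
  ⟨h.1.comm, h.2.2.1, h.2.1, sup_comm x₂ x₁ ▸ h.2.2.2⟩

theorem Phi.snd_eq_of_self (h : Phi c x₁ x₂ c) : x₂ = c :=
  le_antisymm (le_sup_right.trans (h.2.2.2.trans (sup_idem c)).le)
    (h.2.2.1.2.2 c le_sup_left le_sup_left)

theorem Phi.eq_fst_of_snd_eq (h : Phi c x₁ x₂ x) (hx₂ : x₂ = c) : x = x₁ := by
  obtain ⟨hdist, hp₁, -, hjoin⟩ := h
  rw [hx₂] at hdist hjoin
  exact le_antisymm
    (hp₁.2.2 x le_sup_left (le_sup_left.trans (hjoin.symm.trans (sup_comm _ _)).le))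
    (hdist.2.2 x₁ le_sup_right (le_sup_left.trans hjoin.le))

end

namespace CDirectSum

variable [SemilatticeSup α] {c : α} {I₁ I₂ : Set α}

theorem symm (h : CDirectSum c I₁ I₂) : CDirectSum c I₂ I₁ where
  sub1 := h.sub2
  sub2 := h.sub1
  mod1 x y x₂ hx₂ x₁ hx₁ hle := (h.mod1 x y x₁ hx₁ x₂ hx₂ (sup_comm x₂ x₁ ▸ hle)).comm
  mod2 x y x₂ hx₂ x₁ hx₁ hle := (h.mod2 x y x₁ hx₁ x₂ hx₂ (sup_comm x₂ x₁ ▸ hle)).symm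
  abs1 := h.abs2
  abs2 := h.abs1
  exi x₂ hx₂ x₁ hx₁ := (h.exi x₁ hx₁ x₂ hx₂).imp fun _ hx => hx.symm
  onto x :=
    let ⟨x₁, hx₁, x₂, hx₂, hx⟩ := h.onto x
    ⟨x₂, hx₂, x₁, hx₁, hx.symm⟩

theorem phi_snd_eq_of_mem_fst (h : CDirectSum c I₁ I₂) (hc : c ∈ I₂) {a x₁ x₂ : α}
    (ha : a ∈ I₁) (hx₁ : x₁ ∈ I₁) (hx₂ : x₂ ∈ I₂) (hφ : Phi c x₁ x₂ a) : x₂ = c := by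
  obtain ⟨hdist, hp₁, hp₂, hjoin⟩ := hφ
  have hx₂c : x₂ ≤ c := by
    simpa only [sup_idem] using (h.abs2 x₂ hx₂ c hc a ha).le_of_le
      (le_sup_right.trans (hjoin.trans (sup_comm a c)).le)
  have hx₁_le : x₁ ≤ a ⊔ x₂ :=
    ((h.abs1 x₁ hx₁ a ha x₂ hx₂).2 x₁ (pMeet_of_le (le_sup_left.trans hjoin.le))).2.1
  have ha_le : a ≤ c ⊔ x₁ :=
    le_sup_left.trans (hjoin.symm.le.trans ((sup_le_sup_left hx₂c _).trans (sup_comm x₁ c).le))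
  obtain rfl : x₁ = a :=
    le_antisymm (hdist.2.2 x₁ le_sup_right hx₁_le) (hp₁.2.2 a le_sup_left ha_le)
  exact le_antisymm hx₂c (hp₂.2.2 c (le_sup_right.trans hjoin.symm.le) le_sup_left)

theorem fst_eq_setOf_snd_eq (h : CDirectSum c I₁ I₂) {π₁ π₂ : α → α}
    (hπ : ∀ x : α, π₁ x ∈ I₁ ∧ π₂ x ∈ I₂ ∧ Phi c (π₁ x) (π₂ x) x) :
    I₁ = {a : α | π₂ a = π₂ c} := by
  have hπc : π₂ c = c := (hπ c).2.2.snd_eq_of_self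
  have hc : c ∈ I₂ := hπc ▸ (hπ c).2.1
  ext a
  obtain ⟨ha₁, ha₂, hφ⟩ := hπ a
  rw [Set.mem_ofPred_eq, hπc]
  refine ⟨fun ha => h.phi_snd_eq_of_mem_fst hc ha ha₁ ha₂ hφ, fun ha => ?_⟩
  rw [hφ.eq_fst_of_snd_eq ha]
  exact ha₁

end CDirectSum

/-- in a c-direct sum with projections π₁, π₂ determined by φ_c,
I₁ is the class of c under ker π₂, and I₂ the class of c under ker π₁. -/
theorem summands_are_kernel_classes [SemilatticeSup α] (c : α)
    (I₁ I₂ : Set α) (h : CDirectSum c I₁ I₂) (π₁ π₂ : α → α)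
    (hπ : ∀ x : α, π₁ x ∈ I₁ ∧ π₂ x ∈ I₂ ∧ Phi c (π₁ x) (π₂ x) x) :
    I₁ = {a : α | π₂ a = π₂ c} ∧ I₂ = {a : α | π₁ a = π₁ c} :=
  ⟨h.fst_eq_setOf_snd_eq hπ,
    h.symm.fst_eq_setOf_snd_eq fun x => ⟨(hπ x).2.1, (hπ x).1, (hπ x).2.2.symm⟩⟩
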